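/- arXiv:0909.3343 — 3 statements merged into one kernel-verified Lean document; each statement's English description precedes it below -/
import Mathlib

section
/- Coupled discrete contraction with noise: let x, y be sequences in normed spaces with ‖x(t)‖ ≤ (1 - h₁G₁/(1+‖y(t-1)‖)^{β₁} + h₁H₁)·‖x(t-1)‖ and ‖y(t)‖ ≤ (1 - h₂G₂/(1+‖x(t-1)‖)^{β₂} + h₂H₂)·‖y(t-1)‖ for 1 ≤ t ≤ T, where H₁ = G₁/(2(1+‖y(0)‖)^{β₁}), H₂ = G₂/(2(1+‖x(0)‖)^{β₂}), 0 < h₁ < 1/G₁, 0 < h₂ < 1/G₂, G₁, G₂ > 0, β₁, β₂ ≥ 0. Then for all 0 ≤ t < T: ‖x(t)‖ ≤ ‖x(0)‖·(1 - h₁H₁)^t and ‖y(t)‖ ≤ ‖y(0)‖·(1 - h₂H₂)^t. -/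
/-!
Both norms stay below their initial values, so `(1 + ‖y t‖) ^ β₁ ≤ (1 + ‖y 0‖) ^ β₁`, and the
contraction term `h₁ G₁ / (1 + ‖y t‖) ^ β₁` is at least `2 h₁ H₁`: it absorbs the noise `h₁ H₁`
with a margin `h₁ H₁` to spare. Hence every step contracts by `1 - h₁ H₁ ∈ [0, 1]` (similarly for
`y`), which in turn keeps both norms below their initial values; a joint induction closes the loop.
-/

open Real

theorem coupled_geometric_decay {a b : ℕ → ℝ} {p q : ℝ → ℝ} {c d : ℝ} {T : ℕ}
    (ha : ∀ n, 0 ≤ a n) (hb : ∀ n, 0 ≤ b n)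
    (hc : c ∈ Set.Icc (0 : ℝ) 1) (hd : d ∈ Set.Icc (0 : ℝ) 1)
    (hp : ∀ s, 0 ≤ s → s ≤ b 0 → p s ≤ c) (hq : ∀ s, 0 ≤ s → s ≤ a 0 → q s ≤ d)
    (ha_succ : ∀ n, n + 1 ≤ T → a (n + 1) ≤ p (b n) * a n)
    (hb_succ : ∀ n, n + 1 ≤ T → b (n + 1) ≤ q (a n) * b n) :
    ∀ t ≤ T, a t ≤ a 0 * c ^ t ∧ b t ≤ b 0 * d ^ t := by
  have decay_step {u : ℕ → ℝ} {r : ℝ} (hu : ∀ n, 0 ≤ u n) (hr : r ∈ Set.Icc (0 : ℝ) 1) (n : ℕ)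
      (hn : u n ≤ u 0 * r ^ n) (f : ℝ) (hf : f ≤ r) (hstep : u (n + 1) ≤ f * u n) :
      u (n + 1) ≤ u 0 * r ^ (n + 1) :=
    calc u (n + 1) ≤ f * u n := hstep
      _ ≤ r * (u 0 * r ^ n) := mul_le_mul hf hn (hu n) hr.1
      _ = u 0 * r ^ (n + 1) := by ring
  have le_initial {u : ℕ → ℝ} {r : ℝ} (hu : ∀ n, 0 ≤ u n) (hr : r ∈ Set.Icc (0 : ℝ) 1) (n : ℕ)
      (hn : u n ≤ u 0 * r ^ n) : u n ≤ u 0 :=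
    hn.trans (mul_le_of_le_one_right (hu 0) (pow_le_one₀ hr.1 hr.2))
  intro t
  induction t with
  | zero => simp
  | succ n ih =>
    intro hn
    obtain ⟨iha, ihb⟩ := ih (Nat.le_of_succ_le hn)
    exact ⟨decay_step ha hc n iha _ (hp _ (hb n) (le_initial hb hd n ihb)) (ha_succ n hn),
      decay_step hb hd n ihb _ (hq _ (ha n) (le_initial ha hc n iha)) (hb_succ n hn)⟩

section ContractionFactor

variable {h G β s s₀ : ℝ}

theorem div_two_mul_one_add_rpow_le_half (hG : 0 ≤ G) (hβ : 0 ≤ β) (hs₀ : 0 ≤ s₀) :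
    G / (2 * (1 + s₀) ^ β) ≤ G / 2 :=
  div_le_div_of_nonneg_left hG two_pos
    (le_mul_of_one_le_right zero_le_two (one_le_rpow (by linarith) hβ))

theorem one_sub_mul_div_two_mul_one_add_rpow_mem_Icc (hh : 0 ≤ h) (hG : 0 ≤ G)
    (hhG : h * G ≤ 1) (hβ : 0 ≤ β) (hs₀ : 0 ≤ s₀) :
    1 - h * (G / (2 * (1 + s₀) ^ β)) ∈ Set.Icc (0 : ℝ) 1 := by
  have hH₀ : 0 ≤ G / (2 * (1 + s₀) ^ β) := by positivity
  have hH : h * (G / (2 * (1 + s₀) ^ β)) ≤ h * (G / 2) :=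
    mul_le_mul_of_nonneg_left (div_two_mul_one_add_rpow_le_half hG hβ hs₀) hh
  constructor
  · linarith
  · linarith [mul_nonneg hh hH₀]

theorem one_sub_div_rpow_add_le (hh : 0 ≤ h) (hG : 0 ≤ G) (hβ : 0 ≤ β) (hs : 0 ≤ s)
    (hs₀ : s ≤ s₀) :
    1 - h * G / (1 + s) ^ β + h * (G / (2 * (1 + s₀) ^ β)) ≤
      1 - h * (G / (2 * (1 + s₀) ^ β)) := by
  have hdiv : G / (1 + s₀) ^ β ≤ G / (1 + s) ^ β :=
    div_le_div_of_nonneg_left hG (rpow_pos_of_pos (by linarith) β)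
      (rpow_le_rpow (by linarith) (by linarith) hβ)
  have hmul := mul_le_mul_of_nonneg_left hdiv hh
  have hhalf : h * (G / (2 * (1 + s₀) ^ β)) = h * (G / (1 + s₀) ^ β) / 2 := by ring
  rw [hhalf, mul_div_assoc]
  linarith

end ContractionFactor

theorem stmt_7_general {X V : Type*} [NormedAddCommGroup X]
    [NormedAddCommGroup V]
    (h₁ h₂ G₁ G₂ β₁ β₂ : ℝ) (hG₁ : 0 < G₁) (hG₂ : 0 < G₂)
    (hh₁ : 0 < h₁) (hh₁' : h₁ < 1 / G₁) (hh₂ : 0 < h₂) (hh₂' : h₂ < 1 / G₂)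
    (hβ₁ : 0 ≤ β₁) (hβ₂ : 0 ≤ β₂)
    (T : ℕ) (x : ℕ → X) (y : ℕ → V)
    (H₁ H₂ : ℝ)
    (hH₁ : H₁ = G₁ / (2 * (1 + ‖y 0‖) ^ β₁))
    (hH₂ : H₂ = G₂ / (2 * (1 + ‖x 0‖) ^ β₂))
    (hx : ∀ t : ℕ, 1 ≤ t → t ≤ T →
      ‖x t‖ ≤ (1 - h₁ * G₁ / (1 + ‖y (t - 1)‖) ^ β₁ + h₁ * H₁) * ‖x (t - 1)‖)
    (hy : ∀ t : ℕ, 1 ≤ t → t ≤ T →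
      ‖y t‖ ≤ (1 - h₂ * G₂ / (1 + ‖x (t - 1)‖) ^ β₂ + h₂ * H₂) * ‖y (t - 1)‖) :
    ∀ t : ℕ, t < T →
      ‖x t‖ ≤ ‖x 0‖ * (1 - h₁ * H₁) ^ t ∧
      ‖y t‖ ≤ ‖y 0‖ * (1 - h₂ * H₂) ^ t := by
  intro t ht
  subst hH₁ hH₂
  have hh₁G₁ : h₁ * G₁ ≤ 1 := ((lt_div_iff₀ hG₁).mp hh₁').le
  have hh₂G₂ : h₂ * G₂ ≤ 1 := ((lt_div_iff₀ hG₂).mp hh₂').le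
  refine coupled_geometric_decay (a := fun n ↦ ‖x n‖) (b := fun n ↦ ‖y n‖)
    (fun _ ↦ norm_nonneg _) (fun _ ↦ norm_nonneg _)
    (one_sub_mul_div_two_mul_one_add_rpow_mem_Icc hh₁.le hG₁.le hh₁G₁ hβ₁ (norm_nonneg _))
    (one_sub_mul_div_two_mul_one_add_rpow_mem_Icc hh₂.le hG₂.le hh₂G₂ hβ₂ (norm_nonneg _))
    (fun _ hs hs₀ ↦ one_sub_div_rpow_add_le hh₁.le hG₁.le hβ₁ hs hs₀)
    (fun _ hs hs₀ ↦ one_sub_div_rpow_add_le hh₂.le hG₂.le hβ₂ hs hs₀)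
    (fun n hn ↦ hx (n + 1) n.succ_pos hn) (fun n hn ↦ hy (n + 1) n.succ_pos hn) t ht.le

theorem stmt_7 {X V : Type*} [NormedAddCommGroup X] [NormedSpace ℝ X]
    [NormedAddCommGroup V] [NormedSpace ℝ V]
    (h₁ h₂ G₁ G₂ β₁ β₂ : ℝ) (hG₁ : 0 < G₁) (hG₂ : 0 < G₂)
    (hh₁ : 0 < h₁) (hh₁' : h₁ < 1 / G₁) (hh₂ : 0 < h₂) (hh₂' : h₂ < 1 / G₂)
    (hβ₁ : 0 ≤ β₁) (hβ₂ : 0 ≤ β₂)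
    (T : ℕ) (x : ℕ → X) (y : ℕ → V)
    (H₁ H₂ : ℝ)
    (hH₁ : H₁ = G₁ / (2 * (1 + ‖y 0‖) ^ β₁))
    (hH₂ : H₂ = G₂ / (2 * (1 + ‖x 0‖) ^ β₂))
    (hx : ∀ t : ℕ, 1 ≤ t → t ≤ T →
      ‖x t‖ ≤ (1 - h₁ * G₁ / (1 + ‖y (t - 1)‖) ^ β₁ + h₁ * H₁) * ‖x (t - 1)‖)
    (hy : ∀ t : ℕ, 1 ≤ t → t ≤ T →
      ‖y t‖ ≤ (1 - h₂ * G₂ / (1 + ‖x (t - 1)‖) ^ β₂ + h₂ * H₂) * ‖y (t - 1)‖) :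
    ∀ t : ℕ, t < T →
      ‖x t‖ ≤ ‖x 0‖ * (1 - h₁ * H₁) ^ t ∧
      ‖y t‖ ≤ ‖y 0‖ * (1 - h₂ * H₂) ^ t :=
  stmt_7_general h₁ h₂ G₁ G₂ β₁ β₂ hG₁ hG₂ hh₁ hh₁' hh₂ hh₂' hβ₁ hβ₂ T x y H₁ H₂ hH₁ hH₂ hx hy
end

section
/- Coupled continuous decay: let x : [0,T) → X and y : [0,T) → V be C¹ with d/dt ‖x(t)‖² ≤ -2(η(t) - H₁)‖x(t)‖² and d/dt ‖y(t)‖² ≤ -2(ξ(t) - H₂)‖y(t)‖², where η(t) ≥ K₂/(1+‖y(t)‖²)^{β₂}, ξ(t) ≥ K₁/(1+‖x(t)‖²)^{β₁}, H₁ = K₂/(2(1+‖y(0)‖²)^{β₂}), H₂ = K₁/(2(1+‖x(0)‖²)^{β₁}), K₁, K₂ > 0, β₁, β₂ ≥ 0. Then for all t ∈ [0,T): ‖x(t)‖² ≤ ‖x(0)‖²·e^{-2tH₁} and ‖y(t)‖² ≤ ‖y(0)‖²·e^{-2tH₂}. -/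
/-!
As long as `‖y‖²` stays below `‖y 0‖²`, the coercivity bound gives `η ≥ 2 H₁`, so
`d/dt ‖x‖² ≤ -2 H₁ ‖x‖² ≤ 0`; symmetrically for `y`. A continuity argument shows that both
squared norms therefore never exceed their initial values on `[0, T)`, and Grönwall's
inequality with rate `-2 H₁` (resp. `-2 H₂`) then gives the exponential decay.
-/

open Real Set Filter Topology

theorem le_mul_exp_of_deriv_le {f : ℝ → ℝ} (hf : Differentiable ℝ f) {K t : ℝ} (ht : 0 ≤ t)
    (bound : ∀ s ∈ Ico 0 t, deriv f s ≤ K * f s) : f t ≤ f 0 * exp (K * t) := by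
  have := le_gronwallBound_of_liminf_deriv_right_le hf.continuous.continuousOn
    (fun s _ _ hr => (hf s).hasDerivAt.hasDerivWithinAt.liminf_right_slope_le hr) le_rfl
    (fun s hs => (bound s hs).trans_eq (add_zero _).symm) t ⟨ht, le_rfl⟩
  rwa [sub_zero, gronwallBound_ε0] at this

theorem le_mul_exp_of_deriv_le_neg_mul {f η : ℝ → ℝ} (hf : Differentiable ℝ f)
    (hf_nonneg : ∀ s, 0 ≤ f s) {c t : ℝ} (ht : 0 ≤ t) (hη : ∀ s ∈ Ico 0 t, 2 * c ≤ η s)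
    (hd : ∀ s ∈ Ico 0 t, deriv f s ≤ -2 * (η s - c) * f s) :
    f t ≤ f 0 * exp (-2 * t * c) := by
  rw [mul_right_comm]
  refine le_mul_exp_of_deriv_le hf ht fun s hs => (hd s hs).trans ?_
  nlinarith [hη s hs, hf_nonneg s]

theorem eventually_le_of_eventually_deriv_nonpos {f : ℝ → ℝ} (hf : Differentiable ℝ f) {u : ℝ}
    (h : ∀ᶠ s in 𝓝[≥] u, deriv f s ≤ 0) : ∀ᶠ s in 𝓝[≥] u, f s ≤ f u := by
  obtain ⟨v, huv, hsub⟩ := mem_nhdsGE_iff_exists_Ico_subset.mp h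
  have hanti : AntitoneOn f (Ico u v) :=
    antitoneOn_of_deriv_nonpos (convex_Ico u v) hf.continuous.continuousOn hf.differentiableOn
      fun s hs => hsub (Ioo_subset_Ico_self (by rwa [interior_Ico] at hs))
  exact mem_nhdsGE_iff_exists_Ico_subset.mpr
    ⟨v, huv, fun s hs => hanti (left_mem_Ico.mpr huv) hs hs.1⟩

theorem le_initial_of_coupled_deriv_le {A B η ξ : ℝ → ℝ} {T a b : ℝ}
    (hA : Differentiable ℝ A) (hB : Differentiable ℝ B) (hη : Continuous η) (hξ : Continuous ξ)
    (hA_nonneg : ∀ s, 0 ≤ A s) (hB_nonneg : ∀ s, 0 ≤ B s)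
    (hηB : ∀ s ∈ Ico 0 T, B s ≤ B 0 → a < η s) (hξA : ∀ s ∈ Ico 0 T, A s ≤ A 0 → b < ξ s)
    (hdA : ∀ s ∈ Ico 0 T, deriv A s ≤ -2 * (η s - a) * A s)
    (hdB : ∀ s ∈ Ico 0 T, deriv B s ≤ -2 * (ξ s - b) * B s) :
    ∀ t ∈ Ico 0 T, A t ≤ A 0 ∧ B t ≤ B 0 := by
  intro t ht
  let S := {u | A u ≤ A 0 ∧ B u ≤ B 0}
  have hS : IsClosed S :=
    (isClosed_le hA.continuous continuous_const).inter (isClosed_le hB.continuous continuous_const)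
  refine (hS.inter isClosed_Icc).Icc_subset_of_forall_mem_nhdsWithin ⟨le_rfl, le_rfl⟩ ?_
    ⟨ht.1, le_rfl⟩
  rintro u ⟨⟨hAu, hBu⟩, hu₀, hut⟩
  have huT : u ∈ Ico 0 T := ⟨hu₀, hut.trans ht.2⟩
  have hnear : ∀ᶠ s in 𝓝[≥] u, s ∈ Ico 0 T ∧ a < η s ∧ b < ξ s := by
    filter_upwards [self_mem_nhdsWithin, nhdsWithin_le_nhds (gt_mem_nhds huT.2),
      nhdsWithin_le_nhds (hη.continuousAt.eventually (lt_mem_nhds (hηB u huT hBu))),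
      nhdsWithin_le_nhds (hξ.continuousAt.eventually (lt_mem_nhds (hξA u huT hAu)))]
      with s hus hsT hηs hξs
    exact ⟨⟨hu₀.trans hus, hsT⟩, hηs, hξs⟩
  have hA_le := eventually_le_of_eventually_deriv_nonpos hA <| hnear.mono fun s ⟨hs, hηs, _⟩ =>
    (hdA s hs).trans (mul_nonpos_of_nonpos_of_nonneg (by linarith) (hA_nonneg s))
  have hB_le := eventually_le_of_eventually_deriv_nonpos hB <| hnear.mono fun s ⟨hs, _, hξs⟩ =>
    (hdB s hs).trans (mul_nonpos_of_nonpos_of_nonneg (by linarith) (hB_nonneg s))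
  filter_upwards [nhdsWithin_mono u Ioi_subset_Ici_self (hA_le.and hB_le)] with s hs
  exact ⟨hs.1.trans hAu, hs.2.trans hBu⟩

theorem stmt_12 {X V : Type*} [NormedAddCommGroup X] [InnerProductSpace ℝ X]
    [NormedAddCommGroup V] [InnerProductSpace ℝ V]
    (T K₁ K₂ β₁ β₂ : ℝ) (hK₁ : 0 < K₁) (hK₂ : 0 < K₂)
    (hβ₁ : 0 ≤ β₁) (hβ₂ : 0 ≤ β₂)
    (x : ℝ → X) (y : ℝ → V)
    (hx : Differentiable ℝ x) (hy : Differentiable ℝ y)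
    (η ξ : ℝ → ℝ) (hη : Continuous η) (hξ : Continuous ξ)
    (H₁ H₂ : ℝ)
    (hH₁ : H₁ = K₂ / (2 * (1 + ‖y 0‖ ^ 2) ^ β₂))
    (hH₂ : H₂ = K₁ / (2 * (1 + ‖x 0‖ ^ 2) ^ β₁))
    (hηb : ∀ t ∈ Set.Ico (0 : ℝ) T, K₂ / (1 + ‖y t‖ ^ 2) ^ β₂ ≤ η t)
    (hξb : ∀ t ∈ Set.Ico (0 : ℝ) T, K₁ / (1 + ‖x t‖ ^ 2) ^ β₁ ≤ ξ t)
    (hdx : ∀ t ∈ Set.Ico (0 : ℝ) T,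
      deriv (fun s => ‖x s‖ ^ 2) t ≤ -2 * (η t - H₁) * ‖x t‖ ^ 2)
    (hdy : ∀ t ∈ Set.Ico (0 : ℝ) T,
      deriv (fun s => ‖y s‖ ^ 2) t ≤ -2 * (ξ t - H₂) * ‖y t‖ ^ 2) :
    ∀ t ∈ Set.Ico (0 : ℝ) T,
      ‖x t‖ ^ 2 ≤ ‖x 0‖ ^ 2 * Real.exp (-2 * t * H₁) ∧
      ‖y t‖ ^ 2 ≤ ‖y 0‖ ^ 2 * Real.exp (-2 * t * H₂) := by
  have hH₁_pos : 0 < H₁ := by rw [hH₁]; positivity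
  have hH₂_pos : 0 < H₂ := by rw [hH₂]; positivity
  have hη₂ : ∀ s ∈ Ico 0 T, ‖y s‖ ^ 2 ≤ ‖y 0‖ ^ 2 → 2 * H₁ ≤ η s := fun s hs hys =>
    calc 2 * H₁ = K₂ / (1 + ‖y 0‖ ^ 2) ^ β₂ := by rw [hH₁]; field_simp
      _ ≤ K₂ / (1 + ‖y s‖ ^ 2) ^ β₂ := by gcongr
      _ ≤ η s := hηb s hs
  have hξ₂ : ∀ s ∈ Ico 0 T, ‖x s‖ ^ 2 ≤ ‖x 0‖ ^ 2 → 2 * H₂ ≤ ξ s := fun s hs hxs =>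
    calc 2 * H₂ = K₁ / (1 + ‖x 0‖ ^ 2) ^ β₁ := by rw [hH₂]; field_simp
      _ ≤ K₁ / (1 + ‖x s‖ ^ 2) ^ β₁ := by gcongr
      _ ≤ ξ s := hξb s hs
  have hx₂ := hx.norm_sq ℝ
  have hy₂ := hy.norm_sq ℝ
  have hbounded := le_initial_of_coupled_deriv_le hx₂ hy₂ hη hξ
    (fun s => by positivity) (fun s => by positivity)
    (fun s hs h => by linarith [hη₂ s hs h]) (fun s hs h => by linarith [hξ₂ s hs h]) hdx hdy
  intro t ht
  have hsub : Ico 0 t ⊆ Ico 0 T := Ico_subset_Ico_right ht.2.le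
  exact ⟨le_mul_exp_of_deriv_le_neg_mul hx₂ (fun s => by positivity) ht.1
      (fun s hs => hη₂ s (hsub hs) (hbounded s (hsub hs)).2) fun s hs => hdx s (hsub hs),
    le_mul_exp_of_deriv_le_neg_mul hy₂ (fun s => by positivity) ht.1
      (fun s hs => hξ₂ s (hsub hs) (hbounded s (hsub hs)).1) fun s hs => hdy s (hsub hs)⟩
end

section
/- Bootstrap lemma (case α > 1): let a, b > 0, α > 1 with (1/(aα))^{1/(α-1)}·(α-1)/α > b, and let M(z) = z - a·z^α - b with positive zeros z_l < z_r. If z : ℕ → ℝ satisfies z(0) ≤ b < z_l, M(z(t)) ≤ 0 whenever z(t) ≤ z_r, and consecutive increments satisfy z(t+1) - z(t) < M(z*) where z* = (1/(aα))^{1/(α-1)}, then z(t) ≤ z_l for all t. -/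
/-!
On `[0, ∞)` the map `M z = z - a z^α - b` is strictly concave, so it is positive strictly between
its zeros `z_l < z_r`; since `z(t) ≤ z_r` forces `M(z(t)) ≤ 0`, the sequence never visits
`(z_l, z*)`. It cannot jump over this window either: `M' ≤ 1` gives `M(z*) ≤ z* - z_l`, so every
increment is shorter than the window. Starting below `z_l`, it therefore stays below `z_l`.
-/

open Real Set

theorem StrictConcaveOn.pos_of_mem_Ioo {s : Set ℝ} {f : ℝ → ℝ} (hf : StrictConcaveOn ℝ s f)
    {x y z : ℝ} (hx : x ∈ s) (hy : y ∈ s) (hfx : 0 ≤ f x) (hfy : 0 ≤ f y) (hz : z ∈ Ioo x y) :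
    0 < f z := by
  have hxy : x < y := hz.1.trans hz.2
  have hmin := hf.lt_on_openSegment hx hy hxy.ne (by rwa [openSegment_eq_Ioo hxy])
  exact (le_min hfx hfy).trans_lt hmin

theorem StrictConvexOn.const_mul {s : Set ℝ} {f : ℝ → ℝ} (hf : StrictConvexOn ℝ s f) {c : ℝ}
    (hc : 0 < c) : StrictConvexOn ℝ s fun x ↦ c * f x := by
  refine ⟨hf.1, fun x hx y hy hxy u v hu hv huv ↦ ?_⟩
  have := mul_lt_mul_of_pos_left (hf.2 hx hy hxy hu hv huv) hc
  simp only [smul_eq_mul] at this ⊢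
  linarith

theorem strictConcaveOn_sub_mul_rpow_sub {a α : ℝ} (b : ℝ) (ha : 0 < a) (hα : 1 < α) :
    StrictConcaveOn ℝ (Ici 0) fun z : ℝ ↦ z - a * z ^ α - b :=
  (((concaveOn_id (convex_Ici 0)).sub_strictConvexOn
    ((strictConvexOn_rpow hα).const_mul ha)).add_const (-b)).congr fun _ _ ↦ by
      simp [sub_eq_add_neg]

theorem sub_mul_rpow_sub_le_add_sub {a α x y : ℝ} (b : ℝ) (ha : 0 ≤ a) (hα : 0 ≤ α)
    (hx : 0 ≤ x) (hxy : x ≤ y) :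
    y - a * y ^ α - b ≤ (x - a * x ^ α - b) + (y - x) := by
  have := mul_le_mul_of_nonneg_left (rpow_le_rpow hx hxy hα) ha
  linarith

theorem forall_le_of_sub_lt_of_notMem_Ioo {z : ℕ → ℝ} {c s : ℝ} (h0 : z 0 ≤ c)
    (hstep : ∀ t, z (t + 1) - z t < s - c) (hgap : ∀ t, z t ∉ Ioo c s) : ∀ t, z t ≤ c := by
  intro t
  induction t with
  | zero => exact h0
  | succ n ih =>
    by_contra! h
    exact hgap (n + 1) ⟨h, by linarith [hstep n]⟩

theorem stmt_14_general (a b α : ℝ) (ha : 0 < a) (hα : 1 < α)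
    (M : ℝ → ℝ) (hM : ∀ z : ℝ, M z = z - a * z ^ α - b)
    (zstar : ℝ)
    (zl zr : ℝ) (hzl : 0 < zl) (hlr : zl < zr)
    (hMl : M zl = 0) (hMr : M zr = 0)
    (hls : zl < zstar) (hsr : zstar < zr)
    (z : ℕ → ℝ)
    (hz0 : z 0 ≤ b) (hbl : b < zl)
    (hzM : ∀ t : ℕ, z t ≤ zr → M (z t) ≤ 0)
    (hinc : ∀ t : ℕ, z (t + 1) - z t < M zstar) :
    ∀ t : ℕ, z t ≤ zl := by
  have hMstar : M zstar ≤ zstar - zl := by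
    have := sub_mul_rpow_sub_le_add_sub b ha.le (zero_lt_one.trans hα).le hzl.le hls.le
    rw [← hM, ← hM, hMl] at this
    linarith
  have hM_concave : StrictConcaveOn ℝ (Ici 0) M :=
    (funext hM).symm ▸ strictConcaveOn_sub_mul_rpow_sub b ha hα
  refine forall_le_of_sub_lt_of_notMem_Ioo (hz0.trans hbl.le)
    (fun t ↦ (hinc t).trans_le hMstar) fun t ht ↦ ?_
  have hzr : z t < zr := ht.2.trans hsr
  have hpos := hM_concave.pos_of_mem_Ioo (mem_Ici.2 hzl.le) (mem_Ici.2 (hzl.trans hlr).le)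
    hMl.ge hMr.ge ⟨ht.1, hzr⟩
  exact (hzM t hzr.le).not_gt hpos

theorem stmt_14 (a b α : ℝ) (ha : 0 < a) (hb : 0 < b) (hα : 1 < α)
    (hgap : (1 / (a * α)) ^ (1 / (α - 1)) * ((α - 1) / α) > b)
    (M : ℝ → ℝ) (hM : ∀ z : ℝ, M z = z - a * z ^ α - b)
    (zstar : ℝ) (hzstar : zstar = (1 / (a * α)) ^ (1 / (α - 1)))
    (zl zr : ℝ) (hzl : 0 < zl) (hlr : zl < zr)
    (hMl : M zl = 0) (hMr : M zr = 0)
    (hls : zl < zstar) (hsr : zstar < zr)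
    (z : ℕ → ℝ)
    (hz0 : z 0 ≤ b) (hbl : b < zl)
    (hzM : ∀ t : ℕ, z t ≤ zr → M (z t) ≤ 0)
    (hinc : ∀ t : ℕ, z (t + 1) - z t < M zstar) :
    ∀ t : ℕ, z t ≤ zl :=
  stmt_14_general a b α ha hα M hM zstar zl zr hzl hlr hMl hMr hls hsr z hz0 hbl hzM hinc
end
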